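/- arXiv:2511.08445 — 4 statements merged into one kernel-verified Lean document; each statement's English description precedes it below -/
import Mathlib

section
/- Let c, d be positive integers with d dividing c. Then the map sending the Γ_c(d)-orbit of u ∈ ℙ¹(ℤ/cℤ) to the reduction of u modulo d is a well-defined bijection between the set of orbits Γ_c(d)\ℙ¹(ℤ/cℤ) and ℙ¹(ℤ/dℤ). -/
namespace Stmt6

open Matrix


variable (c : ℕ)

/-- Primitive pairs `(x, y)` over `ℤ/cℤ`, i.e. with `xℤ/cℤ + yℤ/cℤ = ℤ/cℤ`. -/
def PrimPair : Type := {p : ZMod c × ZMod c // IsCoprime p.1 p.2}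

/-- Equivalence by simultaneous scaling by a unit. -/
def projSetoid : Setoid (PrimPair c) where
  r p q := ∃ α : (ZMod c)ˣ, (α : ZMod c) * p.1.1 = q.1.1 ∧ (α : ZMod c) * p.1.2 = q.1.2
  iseqv := by
    constructor
    · intro p; exact ⟨1, by simp, by simp⟩
    · rintro p q ⟨α, h1, h2⟩
      refine ⟨α⁻¹, ?_, ?_⟩
      · rw [← h1, ← mul_assoc]; simp
      · rw [← h2, ← mul_assoc]; simp
    · rintro p q r ⟨α, h1, h2⟩ ⟨β, h3, h4⟩
      refine ⟨β * α, ?_, ?_⟩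
      · rw [Units.val_mul, mul_assoc, h1, h3]
      · rw [Units.val_mul, mul_assoc, h2, h4]

/-- The projective line `ℙ¹(ℤ/cℤ)`. -/
def ProjLine : Type := Quotient (projSetoid c)

/-- Möbius action of `SL₂(ℤ/cℤ)` on primitive pairs. -/
def smulPair (g : SpecialLinearGroup (Fin 2) (ZMod c)) (p : PrimPair c) : PrimPair c :=
  ⟨(g.1 0 0 * p.1.1 + g.1 0 1 * p.1.2, g.1 1 0 * p.1.1 + g.1 1 1 * p.1.2), by
    obtain ⟨u, v, huv⟩ := p.2
    have hdet : g.1 0 0 * g.1 1 1 - g.1 0 1 * g.1 1 0 = 1 := by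
      have h2 := g.2
      rwa [Matrix.det_fin_two] at h2
    exact ⟨u * g.1 1 1 - v * g.1 1 0, -(u * g.1 0 1) + v * g.1 0 0, by
      linear_combination (u * p.1.1 + v * p.1.2) * hdet + huv⟩⟩

lemma smulPair_compat (g : SpecialLinearGroup (Fin 2) (ZMod c)) {p q : PrimPair c}
    (h : (projSetoid c).r p q) : (projSetoid c).r (smulPair c g p) (smulPair c g q) := by
  obtain ⟨α, h1, h2⟩ := h
  refine ⟨α, ?_, ?_⟩
  · show (α : ZMod c) * (g.1 0 0 * p.1.1 + g.1 0 1 * p.1.2)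
      = g.1 0 0 * q.1.1 + g.1 0 1 * q.1.2
    linear_combination (g.1 0 0 : ZMod c) * h1 + (g.1 0 1 : ZMod c) * h2
  · show (α : ZMod c) * (g.1 1 0 * p.1.1 + g.1 1 1 * p.1.2)
      = g.1 1 0 * q.1.1 + g.1 1 1 * q.1.2
    linear_combination (g.1 1 0 : ZMod c) * h1 + (g.1 1 1 : ZMod c) * h2

/-- Möbius action of `SL₂(ℤ/cℤ)` on the projective line. -/
def act (g : SpecialLinearGroup (Fin 2) (ZMod c)) : ProjLine c → ProjLine c :=
  Quotient.map (smulPair c g) (fun _ _ h => smulPair_compat c g h)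

/-- Reduction mod `d` on primitive pairs. -/
def redPair (d : ℕ) (hdc : d ∣ c) (p : PrimPair c) : PrimPair d :=
  ⟨(ZMod.castHom hdc (ZMod d) p.1.1, ZMod.castHom hdc (ZMod d) p.1.2),
    p.2.map (ZMod.castHom hdc (ZMod d))⟩

lemma redPair_compat (d : ℕ) (hdc : d ∣ c) {p q : PrimPair c}
    (h : (projSetoid c).r p q) :
    (projSetoid d).r (redPair c d hdc p) (redPair c d hdc q) := by
  obtain ⟨α, h1, h2⟩ := h
  refine ⟨Units.map (ZMod.castHom hdc (ZMod d)).toMonoidHom α, ?_, ?_⟩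
  · show (ZMod.castHom hdc (ZMod d)) (α : ZMod c) * (ZMod.castHom hdc (ZMod d)) p.1.1
      = (ZMod.castHom hdc (ZMod d)) q.1.1
    rw [← RingHom.map_mul, h1]
  · show (ZMod.castHom hdc (ZMod d)) (α : ZMod c) * (ZMod.castHom hdc (ZMod d)) p.1.2
      = (ZMod.castHom hdc (ZMod d)) q.1.2
    rw [← RingHom.map_mul, h2]

/-- Reduction map `ℙ¹(ℤ/cℤ) → ℙ¹(ℤ/dℤ)`. -/
def red (d : ℕ) (hdc : d ∣ c) : ProjLine c → ProjLine d :=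
  Quotient.map (redPair c d hdc) (fun _ _ h => redPair_compat c d hdc h)

/-- The congruence subgroup `Γ_c(d) = ker(SL₂(ℤ/cℤ) → SL₂(ℤ/dℤ))`. -/
def Gamma (d : ℕ) (hdc : d ∣ c) : Subgroup (SpecialLinearGroup (Fin 2) (ZMod c)) :=
  MonoidHom.ker (SpecialLinearGroup.map (ZMod.castHom hdc (ZMod d)))

-- auxiliary lemmas
lemma natLift (x y n m : ℕ) (hn : n ≠ 0) (h : Nat.Coprime (Nat.gcd x y) m) :
    ∃ k, Nat.Coprime (Nat.gcd x (y + k * m)) n := by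
  classical
  refine ⟨(n.primeFactors.filter (fun p => ¬ p ∣ y)).prod id, ?_⟩
  set ps := n.primeFactors.filter (fun p => ¬ p ∣ y) with hps
  apply Nat.coprime_of_dvd
  intro p pp hpg hpc
  have hp1 : p ∣ x := hpg.trans (Nat.gcd_dvd_left _ _)
  have hp2 : p ∣ y + ps.prod id * m := hpg.trans (Nat.gcd_dvd_right _ _)
  by_cases hpy : p ∣ y
  · have hkd : p ∣ ps.prod id * m := (Nat.dvd_add_right hpy).mp hp2
    rcases pp.dvd_mul.mp hkd with hk | hdd
    · obtain ⟨q, hq, hq'⟩ := (pp.prime.dvd_finset_prod_iff id).mp hk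
      have hq2 := Finset.mem_filter.mp hq
      have : p = q := (Nat.prime_dvd_prime_iff_eq pp
        (Nat.prime_of_mem_primeFactors hq2.1)).mp hq'
      exact hq2.2 (this ▸ hpy)
    · have : p ∣ Nat.gcd (Nat.gcd x y) m := Nat.dvd_gcd (Nat.dvd_gcd hp1 hpy) hdd
      exact pp.ne_one (Nat.dvd_one.mp (h ▸ this))
  · have hpsmem : p ∈ ps := Finset.mem_filter.mpr
      ⟨Nat.mem_primeFactors.mpr ⟨pp, hpc, hn⟩, hpy⟩
    have hk : p ∣ ps.prod id * m := (Finset.dvd_prod_of_mem id hpsmem).mul_right m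
    have : p ∣ y := by
      have := Nat.dvd_sub hp2 hk
      rwa [Nat.add_sub_cancel] at this
    exact hpy this

lemma coprime_val_of_isCoprime (d : ℕ) (hd : 0 < d) (x y : ZMod d) (h : IsCoprime x y) :
    Nat.Coprime (Nat.gcd x.val y.val) d := by
  haveI : NeZero d := ⟨hd.ne'⟩
  obtain ⟨u, v, huv⟩ := h
  apply Nat.coprime_of_dvd
  intro p pp hpg hpd
  haveI : Fact (1 < p) := ⟨pp.one_lt⟩
  have hpx : p ∣ x.val := hpg.trans (Nat.gcd_dvd_left _ _)
  have hpy : p ∣ y.val := hpg.trans (Nat.gcd_dvd_right _ _)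
  let f := ZMod.castHom hpd (ZMod p)
  have hx : f x = 0 := by
    rw [ZMod.castHom_apply, ← ZMod.natCast_val, ZMod.natCast_eq_zero_iff]
    exact hpx
  have hy : f y = 0 := by
    rw [ZMod.castHom_apply, ← ZMod.natCast_val, ZMod.natCast_eq_zero_iff]
    exact hpy
  have : (1 : ZMod p) = 0 := by
    have := congrArg f huv
    rw [map_add, _root_.map_mul, _root_.map_mul, _root_.map_one, hx, hy] at this
    simpa using this.symm
  exact one_ne_zero this

lemma isCoprime_natCast_of_coprime (a b : ℕ) (h : Nat.Coprime (Nat.gcd a b) c) :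
    IsCoprime ((a : ZMod c)) ((b : ZMod c)) := by
  have h1 : IsCoprime ((Nat.gcd a b : ℤ)) ((c : ℤ)) := by
    rw [Int.isCoprime_iff_gcd_eq_one]
    exact_mod_cast h
  obtain ⟨u, v, huv⟩ := h1
  have hbez : ((Nat.gcd a b : ℤ)) = a * Nat.gcdA a b + b * Nat.gcdB a b :=
    Nat.gcd_eq_gcd_ab a b
  refine ⟨((u * Nat.gcdA a b : ℤ) : ZMod c), ((u * Nat.gcdB a b : ℤ) : ZMod c), ?_⟩
  have key : ((u * Nat.gcdA a b) * a + (u * Nat.gcdB a b) * b + v * c : ℤ) = 1 := by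
    rw [← huv, hbez]; ring
  calc ((u * Nat.gcdA a b : ℤ) : ZMod c) * (a : ZMod c)
        + ((u * Nat.gcdB a b : ℤ) : ZMod c) * (b : ZMod c)
      = (((u * Nat.gcdA a b) * a + (u * Nat.gcdB a b) * b + v * c : ℤ) : ZMod c) := by
        push_cast
        simp [ZMod.natCast_self]
    _ = 1 := by rw [key]; norm_cast

def ePair : PrimPair c := ⟨(1, 0), isCoprime_one_left⟩

lemma smulPair_mul (g h : SpecialLinearGroup (Fin 2) (ZMod c)) (p : PrimPair c) :
    smulPair c (g * h) p = smulPair c g (smulPair c h p) := by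
  apply Subtype.ext
  refine Prod.ext ?_ ?_ <;>
  · show _ = _
    simp only [smulPair, Matrix.SpecialLinearGroup.coe_mul, Matrix.mul_apply,
      Fin.sum_univ_two]
    ring

lemma exists_smul_e (p : PrimPair c) :
    ∃ g : SpecialLinearGroup (Fin 2) (ZMod c), smulPair c g (ePair c) = p := by
  obtain ⟨g, hg0, hg1⟩ := p.2.exists_SL2_col 0
  refine ⟨g, Subtype.ext (Prod.ext ?_ ?_)⟩
  · show g.1 0 0 * 1 + g.1 0 1 * 0 = p.1.1
    rw [mul_one, mul_zero, add_zero]; exact hg0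
  · show g.1 1 0 * 1 + g.1 1 1 * 0 = p.1.2
    rw [mul_one, mul_zero, add_zero]; exact hg1

lemma map_entry {R S : Type*} [CommRing R] [CommRing S] (φ : R →+* S)
    (g : SpecialLinearGroup (Fin 2) R) (i j : Fin 2) :
    (SpecialLinearGroup.map φ g).1 i j = φ (g.1 i j) := rfl


/-- For `d ∣ c`, the reduction map `ℙ¹(ℤ/cℤ) → ℙ¹(ℤ/dℤ)` is
surjective, and two points of `ℙ¹(ℤ/cℤ)` have the same reduction mod `d` iff they lie
in the same `Γ_c(d)`-orbit; i.e. reduction induces a well-defined bijection from the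
orbit space `Γ_c(d)\ℙ¹(ℤ/cℤ)` onto `ℙ¹(ℤ/dℤ)`. -/
theorem stmt6 (d : ℕ) (hc : 0 < c) (hd : 0 < d) (hdc : d ∣ c) :
    (∀ v : ProjLine d, ∃ u : ProjLine c, red c d hdc u = v) ∧
    (∀ u v : ProjLine c,
      red c d hdc u = red c d hdc v ↔ ∃ γ ∈ Gamma c d hdc, act c γ u = v) := by
  haveI : NeZero c := ⟨hc.ne'⟩
  haveI : NeZero d := ⟨hd.ne'⟩
  set f := ZMod.castHom hdc (ZMod d) with hf
  constructor
  · -- surjectivity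
    intro v
    obtain ⟨q, rfl⟩ := v.exists_rep
    have hco := coprime_val_of_isCoprime d hd q.1.1 q.1.2 q.2
    obtain ⟨k, hk⟩ := natLift q.1.1.val q.1.2.val c d hc.ne' hco
    have hcop := isCoprime_natCast_of_coprime c q.1.1.val (q.1.2.val + k * d) hk
    refine ⟨Quotient.mk _ ⟨((q.1.1.val : ZMod c), ((q.1.2.val + k * d : ℕ) : ZMod c)),
      hcop⟩, ?_⟩
    have key : redPair c d hdc
        ⟨((q.1.1.val : ZMod c), ((q.1.2.val + k * d : ℕ) : ZMod c)), hcop⟩ = q := by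
      apply Subtype.ext; apply Prod.ext
      · show f ((q.1.1.val : ZMod c)) = q.1.1
        rw [map_natCast, ZMod.natCast_val, ZMod.cast_id]
      · show f (((q.1.2.val + k * d : ℕ) : ZMod c)) = q.1.2
        rw [map_natCast]
        push_cast [ZMod.natCast_self, ZMod.natCast_val, ZMod.cast_id]
        ring
    show Quotient.mk _ (redPair c d hdc _) = _
    rw [key]
  · intro u v
    constructor
    · -- hard direction
      obtain ⟨p, rfl⟩ := u.exists_rep
      obtain ⟨q, rfl⟩ := v.exists_rep
      intro hred
      have hred' : (projSetoid d).r (redPair c d hdc p) (redPair c d hdc q) :=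
        Quotient.exact hred
      obtain ⟨α, h1, h2⟩ := hred'
      obtain ⟨g, hg⟩ := exists_smul_e c p
      obtain ⟨h, hh⟩ := exists_smul_e c q
      have hp1 : p.1.1 = g.1 0 0 := by
        rw [← hg]; show g.1 0 0 * 1 + g.1 0 1 * 0 = g.1 0 0; ring
      have hp2 : p.1.2 = g.1 1 0 := by
        rw [← hg]; show g.1 1 0 * 1 + g.1 1 1 * 0 = g.1 1 0; ring
      have hq1 : q.1.1 = h.1 0 0 := by
        rw [← hh]; show h.1 0 0 * 1 + h.1 0 1 * 0 = h.1 0 0; ring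
      have hq2 : q.1.2 = h.1 1 0 := by
        rw [← hh]; show h.1 1 0 * 1 + h.1 1 1 * 0 = h.1 1 0; ring
      have H1 : (α : ZMod d) * f p.1.1 = f q.1.1 := h1
      have H2 : (α : ZMod d) * f p.1.2 = f q.1.2 := h2
      rw [hp1, hq1] at H1
      rw [hp2, hq2] at H2
      have detG : f (g.1 0 0) * f (g.1 1 1) - f (g.1 0 1) * f (g.1 1 0) = 1 := by
        have hdg := g.2
        rw [Matrix.det_fin_two] at hdg
        have := congrArg f hdg
        rw [map_sub, _root_.map_mul, _root_.map_mul, _root_.map_one] at this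
        exact this
      have detH : f (h.1 0 0) * f (h.1 1 1) - f (h.1 0 1) * f (h.1 1 0) = 1 := by
        have hdh := h.2
        rw [Matrix.det_fin_two] at hdh
        have := congrArg f hdh
        rw [map_sub, _root_.map_mul, _root_.map_mul, _root_.map_one] at this
        exact this
      obtain ⟨β, hβ⟩ := ZMod.unitsMap_surjective hdc α⁻¹
      have hβ1 : f (β : ZMod c) = ((α⁻¹ : (ZMod d)ˣ) : ZMod d) := congrArg Units.val hβ
      have hβinvmap : ZMod.unitsMap hdc β⁻¹ = α := by rw [map_inv, hβ, inv_inv]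
      have hβ2 : f ((β⁻¹ : (ZMod c)ˣ) : ZMod c) = (α : ZMod d) :=
        congrArg Units.val hβinvmap
      have hA : (α : ZMod d) * ((α⁻¹ : (ZMod d)ˣ) : ZMod d) = 1 := by
        rw [← Units.val_mul]; simp
      set μ : ZMod d := f (h.1 1 1) * f (g.1 0 1) - f (h.1 0 1) * f (g.1 1 1) with hμ
      set w : ZMod c := (μ.val : ZMod c) with hwdef
      have hw : f w = μ := by rw [hwdef, map_natCast, ZMod.natCast_val, ZMod.cast_id]
      have hdetT : Matrix.det !![(β : ZMod c), w; 0, ((β⁻¹ : (ZMod c)ˣ) : ZMod c)] = 1 := by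
        rw [Matrix.det_fin_two_of]; simp
      set t : SpecialLinearGroup (Fin 2) (ZMod c) := ⟨_, hdetT⟩ with ht
      refine ⟨h * t * g⁻¹, ?_, ?_⟩
      · show SpecialLinearGroup.map f (h * t * g⁻¹) = 1
        rw [_root_.map_mul, _root_.map_mul, _root_.map_inv, mul_inv_eq_one]
        apply Subtype.ext
        show ((SpecialLinearGroup.map f h : SpecialLinearGroup (Fin 2) (ZMod d)) *
          SpecialLinearGroup.map f t).1 = (SpecialLinearGroup.map f g).1
        rw [Matrix.SpecialLinearGroup.coe_mul]
        ext i j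
        rw [Matrix.mul_apply, Fin.sum_univ_two]
        simp only [map_entry]
        fin_cases i <;> fin_cases j <;>
          simp only [map_entry, ht, Fin.mk_zero, Fin.mk_one, Matrix.cons_val', Matrix.cons_val_zero,
            Matrix.cons_val_one, Matrix.head_cons, Matrix.head_fin_const,
            Matrix.of_apply, Matrix.empty_val', Matrix.cons_val_fin_one, map_zero,
            hβ1, hβ2, hw, hμ, Matrix.SpecialLinearGroup.coe_mk]
        · linear_combination (-((α⁻¹ : (ZMod d)ˣ) : ZMod d)) * H1 + f (g.1 0 0) * hA
        · linear_combination f (h.1 0 1) * f (g.1 1 1) * H1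
            - f (g.1 0 1) * f (h.1 0 1) * H2 + f (g.1 0 1) * detH
            - (α : ZMod d) * f (h.1 0 1) * detG
        · linear_combination (-((α⁻¹ : (ZMod d)ˣ) : ZMod d)) * H2 + f (g.1 1 0) * hA
        · linear_combination f (g.1 1 1) * f (h.1 1 1) * H1
            - f (h.1 1 1) * f (g.1 0 1) * H2 + f (g.1 1 1) * detH
            - (α : ZMod d) * f (h.1 1 1) * detG
      · have hγg : (h * t * g⁻¹) * g = h * t := by group
        have hsp : smulPair c (h * t * g⁻¹) p = smulPair c h (smulPair c t (ePair c)) := by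
          rw [← hg, ← smulPair_mul, hγg, smulPair_mul]
        have hB : ((β⁻¹ : (ZMod c)ˣ) : ZMod c) * (β : ZMod c) = 1 := by
          rw [← Units.val_mul]; simp
        show Quotient.mk _ (smulPair c (h * t * g⁻¹) p) = Quotient.mk _ q
        rw [hsp]
        apply Quotient.sound
        refine ⟨β⁻¹, ?_, ?_⟩
        · show ((β⁻¹ : (ZMod c)ˣ) : ZMod c) *
            (h.1 0 0 * ((β : ZMod c) * 1 + w * 0)
              + h.1 0 1 * (0 * 1 + ((β⁻¹ : (ZMod c)ˣ) : ZMod c) * 0)) = q.1.1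
          rw [hq1]
          linear_combination h.1 0 0 * hB
        · show ((β⁻¹ : (ZMod c)ˣ) : ZMod c) *
            (h.1 1 0 * ((β : ZMod c) * 1 + w * 0)
              + h.1 1 1 * (0 * 1 + ((β⁻¹ : (ZMod c)ˣ) : ZMod c) * 0)) = q.1.2
          rw [hq2]
          linear_combination h.1 1 0 * hB
    · rintro ⟨γ, hγ, rfl⟩
      obtain ⟨p, rfl⟩ := u.exists_rep
      have hγ' : SpecialLinearGroup.map f γ = 1 := hγ
      have e00 : f (γ.1 0 0) = 1 := by
        have := congrArg (fun M : SpecialLinearGroup (Fin 2) (ZMod d) => M.1 0 0) hγ'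
        simpa [map_entry] using this
      have e01 : f (γ.1 0 1) = 0 := by
        have := congrArg (fun M : SpecialLinearGroup (Fin 2) (ZMod d) => M.1 0 1) hγ'
        simpa [map_entry] using this
      have e10 : f (γ.1 1 0) = 0 := by
        have := congrArg (fun M : SpecialLinearGroup (Fin 2) (ZMod d) => M.1 1 0) hγ'
        simpa [map_entry] using this
      have e11 : f (γ.1 1 1) = 1 := by
        have := congrArg (fun M : SpecialLinearGroup (Fin 2) (ZMod d) => M.1 1 1) hγ'
        simpa [map_entry] using this
      have key : redPair c d hdc (smulPair c γ p) = redPair c d hdc p := by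
        apply Subtype.ext; apply Prod.ext
        · show f (γ.1 0 0 * p.1.1 + γ.1 0 1 * p.1.2) = f p.1.1
          rw [map_add, _root_.map_mul, _root_.map_mul, e00, e01]
          ring
        · show f (γ.1 1 0 * p.1.1 + γ.1 1 1 * p.1.2) = f p.1.2
          rw [map_add, _root_.map_mul, _root_.map_mul, e10, e11]
          ring
      show Quotient.mk _ (redPair c d hdc p) = Quotient.mk _ (redPair c d hdc (smulPair c γ p))
      rw [key]

end Stmt6
end

section
/- Let c be a positive integer, a₁, a₂ units modulo c, and 1 ≤ H₁ ≤ H₂ with H₂ ≤ c. For every ε > 0, the number of integer solutions (h₁, h₂) with |h₁| ≤ H₁, |h₂| ≤ H₂ to the equation T^{a₁h₁} S T^{a₂h₂} S = I in PSL₂(ℤ/cℤ) is O_ε(c^ε), where T = (1 1; 0 1) and S = (0 −1; 1 0). -/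
open Matrix

/-- The matrix `T = (1 1; 0 1)` in `SL₂(ℤ/cℤ)`. -/
def Tm (c : ℕ) : SpecialLinearGroup (Fin 2) (ZMod c) :=
  ⟨!![1, 1; 0, 1], by norm_num [Matrix.det_fin_two_of]⟩

/-- The matrix `S = (0 -1; 1 0)` in `SL₂(ℤ/cℤ)`. -/
def Sm (c : ℕ) : SpecialLinearGroup (Fin 2) (ZMod c) :=
  ⟨!![0, -1; 1, 0], by norm_num [Matrix.det_fin_two_of]⟩

lemma SL_val_mul (c : ℕ) (A B : SpecialLinearGroup (Fin 2) (ZMod c)) :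
    (A * B).1 = A.1 * B.1 := Matrix.SpecialLinearGroup.coe_mul A B

lemma Tm_zpow (c : ℕ) (k : ℤ) : ((Tm c) ^ k).1 = !![1, (k : ZMod c); 0, 1] := by
  induction k using Int.induction_on with
  | zero => simp [Matrix.one_fin_two]
  | succ k ih =>
      rw [_root_.zpow_add, zpow_one, SL_val_mul, ih]
      simp [Tm, Matrix.mul_fin_two]
      push_cast
      ring_nf
  | pred k ih =>
      rw [sub_eq_add_neg, _root_.zpow_add, SL_val_mul, ih]
      have : ((Tm c) ^ (-1 : ℤ)).1 = !![1, -1; 0, 1] := by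
        have h : (Tm c) * ⟨!![1, -1; 0, 1], by norm_num [Matrix.det_fin_two_of]⟩ = 1 := by
          ext i j
          erw [SL_val_mul]
          fin_cases i <;> fin_cases j <;>
            simp [Tm, Matrix.mul_fin_two, Matrix.one_fin_two]
        rw [show ((-1:ℤ)) = -(1:ℤ) by norm_num, _root_.zpow_neg, zpow_one,
          inv_eq_of_mul_eq_one_right h]
      rw [this]
      simp [Matrix.mul_fin_two]
      push_cast
      ring

lemma prod_eq (c : ℕ) (m n : ℤ) :
    ((Tm c) ^ m * Sm c * (Tm c) ^ n * Sm c).1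
      = !![(m : ZMod c) * n - 1, -(m : ZMod c); (n : ZMod c), -1] := by
  have h1 := Tm_zpow c m
  have h2 := Tm_zpow c n
  rw [SL_val_mul, SL_val_mul, SL_val_mul,
    h1, h2]
  simp [Sm, Matrix.mul_fin_two]
  ring_nf

/-- For `c ≥ 1`, units `a₁, a₂` mod `c` and `1 ≤ H₁ ≤ H₂ ≤ c`, the
number of integer solutions `(h₁, h₂)` with `|h₁| ≤ H₁`, `|h₂| ≤ H₂` to
`T^{a₁h₁} S T^{a₂h₂} S = I` in `PSL₂(ℤ/cℤ)` (i.e. `= γI` in `SL₂(ℤ/cℤ)` for some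
`γ` with `γ² = 1`) is `O_ε(c^ε)` for every `ε > 0`. -/
theorem stmt10 : ∀ ε : ℝ, 0 < ε → ∃ C : ℝ, 0 < C ∧
    ∀ (c : ℕ), 0 < c → ∀ (a₁ a₂ : ℤ),
      IsUnit ((a₁ : ZMod c)) → IsUnit ((a₂ : ZMod c)) →
      ∀ H₁ H₂ : ℝ, 1 ≤ H₁ → H₁ ≤ H₂ → H₂ ≤ (c : ℝ) →
      (Nat.card {h : ℤ × ℤ // (|h.1| : ℝ) ≤ H₁ ∧ (|h.2| : ℝ) ≤ H₂ ∧
          ∃ γ : ZMod c, γ ^ 2 = 1 ∧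
            ((Tm c) ^ (a₁ * h.1) * Sm c * (Tm c) ^ (a₂ * h.2) * Sm c).1
              = γ • (1 : Matrix (Fin 2) (Fin 2) (ZMod c))} : ℝ)
        ≤ C * (c : ℝ) ^ ε := by
  intro ε hε
  refine ⟨9, by norm_num, ?_⟩
  intro c hc a₁ a₂ ha₁ ha₂ H₁ H₂ hH₁ hH₁₂ hH₂
  have key : ∀ h : ℤ × ℤ, ((|h.1| : ℝ) ≤ H₁ ∧ (|h.2| : ℝ) ≤ H₂ ∧
      ∃ γ : ZMod c, γ ^ 2 = 1 ∧
        ((Tm c) ^ (a₁ * h.1) * Sm c * (Tm c) ^ (a₂ * h.2) * Sm c).1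
          = γ • (1 : Matrix (Fin 2) (Fin 2) (ZMod c))) →
      h ∈ (({-(c:ℤ), 0, (c:ℤ)} : Finset ℤ) ×ˢ ({-(c:ℤ), 0, (c:ℤ)} : Finset ℤ)) := by
    rintro ⟨h₁, h₂⟩ ⟨hb₁, hb₂, γ, hγ, heq⟩
    rw [prod_eq] at heq
    have e01 : -((a₁ * h₁ : ℤ) : ZMod c) = 0 := by
      have := congrFun (congrFun heq 0) 1
      simpa [Matrix.one_fin_two] using this
    have e10 : ((a₂ * h₂ : ℤ) : ZMod c) = 0 := by
      have := congrFun (congrFun heq 1) 0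
      simpa [Matrix.one_fin_two] using this
    have d1 : (c : ℤ) ∣ h₁ := by
      rw [neg_eq_zero] at e01
      push_cast at e01
      have : ((h₁ : ZMod c)) = 0 := by
        have := ha₁.mul_right_eq_zero.mp e01
        exact this
      exact_mod_cast (ZMod.intCast_zmod_eq_zero_iff_dvd _ _).mp this
    have d2 : (c : ℤ) ∣ h₂ := by
      push_cast at e10
      have : ((h₂ : ZMod c)) = 0 := ha₂.mul_right_eq_zero.mp e10
      exact_mod_cast (ZMod.intCast_zmod_eq_zero_iff_dvd _ _).mp this
    have hb₁' : |h₁| ≤ (c : ℤ) := by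
      have : (|h₁| : ℝ) ≤ (c : ℝ) := le_trans hb₁ (le_trans hH₁₂ hH₂)
      exact_mod_cast this
    have hb₂' : |h₂| ≤ (c : ℤ) := by
      have : (|h₂| : ℝ) ≤ (c : ℝ) := le_trans hb₂ hH₂
      exact_mod_cast this
    have hcz : (0:ℤ) < (c:ℤ) := by exact_mod_cast hc
    have mem1 : h₁ = -(c:ℤ) ∨ h₁ = 0 ∨ h₁ = (c:ℤ) := by
      rcases d1 with ⟨k, rfl⟩
      have hk : |k| ≤ 1 := by
        rw [abs_mul, abs_of_nonneg hcz.le] at hb₁'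
        exact le_of_mul_le_mul_left (by linarith) hcz
      obtain ⟨hk1, hk2⟩ := abs_le.mp hk
      interval_cases k <;> simp
    have mem2 : h₂ = -(c:ℤ) ∨ h₂ = 0 ∨ h₂ = (c:ℤ) := by
      rcases d2 with ⟨k, rfl⟩
      have hk : |k| ≤ 1 := by
        rw [abs_mul, abs_of_nonneg hcz.le] at hb₂'
        exact le_of_mul_le_mul_left (by linarith) hcz
      obtain ⟨hk1, hk2⟩ := abs_le.mp hk
      interval_cases k <;> simp
    simp only [Finset.mem_product, Finset.mem_insert, Finset.mem_singleton]
    tauto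
  have hsub : {h : ℤ × ℤ | (|h.1| : ℝ) ≤ H₁ ∧ (|h.2| : ℝ) ≤ H₂ ∧
      ∃ γ : ZMod c, γ ^ 2 = 1 ∧
        ((Tm c) ^ (a₁ * h.1) * Sm c * (Tm c) ^ (a₂ * h.2) * Sm c).1
          = γ • (1 : Matrix (Fin 2) (Fin 2) (ZMod c))} ⊆
      ↑(({-(c:ℤ), 0, (c:ℤ)} : Finset ℤ) ×ˢ ({-(c:ℤ), 0, (c:ℤ)} : Finset ℤ)) := by
    intro h hh
    exact key h hh
  have hcard : Nat.card {h : ℤ × ℤ // (|h.1| : ℝ) ≤ H₁ ∧ (|h.2| : ℝ) ≤ H₂ ∧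
      ∃ γ : ZMod c, γ ^ 2 = 1 ∧
        ((Tm c) ^ (a₁ * h.1) * Sm c * (Tm c) ^ (a₂ * h.2) * Sm c).1
          = γ • (1 : Matrix (Fin 2) (Fin 2) (ZMod c))} ≤ 9 := by
    have hfin : (↑(({-(c:ℤ), 0, (c:ℤ)} : Finset ℤ) ×ˢ ({-(c:ℤ), 0, (c:ℤ)} : Finset ℤ)) :
        Set (ℤ × ℤ)).Finite := Finset.finite_toSet _
    calc Nat.card {h : ℤ × ℤ // (|h.1| : ℝ) ≤ H₁ ∧ (|h.2| : ℝ) ≤ H₂ ∧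
          ∃ γ : ZMod c, γ ^ 2 = 1 ∧
            ((Tm c) ^ (a₁ * h.1) * Sm c * (Tm c) ^ (a₂ * h.2) * Sm c).1
              = γ • (1 : Matrix (Fin 2) (Fin 2) (ZMod c))}
        ≤ Nat.card (↑(({-(c:ℤ), 0, (c:ℤ)} : Finset ℤ) ×ˢ ({-(c:ℤ), 0, (c:ℤ)} : Finset ℤ)) :
          Set (ℤ × ℤ)) := Nat.card_mono hfin hsub
      _ ≤ 9 := by
          rw [Nat.card_coe_set_eq, Set.ncard_coe_finset, Finset.card_product]
          have h3 : (({-(c:ℤ), 0, (c:ℤ)} : Finset ℤ)).card ≤ 3 := by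
            refine (Finset.card_insert_le _ _).trans (Nat.succ_le_succ ?_)
            refine (Finset.card_insert_le _ _).trans (Nat.succ_le_succ ?_)
            simp
          calc _ ≤ 3 * 3 := Nat.mul_le_mul h3 h3
            _ = 9 := rfl
  have hrp : (1 : ℝ) ≤ (c : ℝ) ^ ε :=
    Real.one_le_rpow (by exact_mod_cast hc) hε.le
  calc (Nat.card _ : ℝ) ≤ 9 := by exact_mod_cast hcard
    _ ≤ 9 * (c : ℝ) ^ ε := by nlinarith
end

section
/- Let p be a prime, m ≥ 1, and a₀, a₁, a₂ ∈ ℤ with not all of a₀, a₁, a₂ divisible by p. Then the number of solutions x ∈ ℤ/p^mℤ to a₂x² + a₁x + a₀ ≡ 0 (mod p^m) is O(p^{⌊m/2⌋}), with an absolute implied constant. -/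
/-- Valuation-style lemma: if `p^(a+b) ∣ u * v` and `p^a ∤ u`, then `p^(b+1) ∣ v`. -/
lemma keydvd {p : ℤ} (hp : Prime p) :
    ∀ (a b : ℕ) (u v : ℤ), p ^ (a + b) ∣ u * v → ¬ p ^ a ∣ u → p ^ (b + 1) ∣ v := by
  intro a
  induction a with
  | zero =>
    intro b u v _ h
    exact absurd (by simpa using (one_dvd u)) h
  | succ n ih =>
    intro b u v hdvd hndvd
    by_cases hpu : p ∣ u
    · obtain ⟨u', rfl⟩ := hpu
      have h2 : p * p ^ (n + b) ∣ p * (u' * v) := by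
        calc p * p ^ (n + b) = p ^ (n + 1 + b) := by ring
          _ ∣ p * u' * v := hdvd
          _ = p * (u' * v) := by ring
      have h3 : p ^ (n + b) ∣ u' * v := (mul_dvd_mul_iff_left hp.ne_zero).mp h2
      refine ih b u' v h3 fun hc => hndvd ?_
      calc p ^ (n + 1) = p * p ^ n := by ring
        _ ∣ p * u' := mul_dvd_mul_left p hc
    · have h3 : p ^ (n + 1 + b) ∣ v := hp.pow_dvd_of_dvd_mul_left _ hpu hdvd
      exact (pow_dvd_pow p (by omega)).trans h3

/-- There is an absolute constant `C` such that for every prime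
`p`, every `m ≥ 1`, and integers `a₀, a₁, a₂` not all divisible by `p`, the number
of solutions `x ∈ ℤ/p^mℤ` to `a₂x² + a₁x + a₀ ≡ 0 (mod p^m)` is at most
`C·p^{⌊m/2⌋}`. -/
theorem stmt16 : ∃ C : ℝ, 0 < C ∧ ∀ (p : ℕ), p.Prime → ∀ m : ℕ, 1 ≤ m →
    ∀ a₀ a₁ a₂ : ℤ, ¬((p : ℤ) ∣ a₀ ∧ (p : ℤ) ∣ a₁ ∧ (p : ℤ) ∣ a₂) →
    (Nat.card {x : ZMod (p ^ m) //
        (a₂ : ZMod (p ^ m)) * x ^ 2 + (a₁ : ZMod (p ^ m)) * x + (a₀ : ZMod (p ^ m)) = 0} : ℝ)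
      ≤ C * (p : ℝ) ^ (m / 2) := by
  refine ⟨2, by norm_num, ?_⟩
  intro p hp m hm a₀ a₁ a₂ hA
  have hp' : Prime (p : ℤ) := Nat.prime_iff_prime_int.mp hp
  set k := (m + 1) / 2 with hk
  set j := m / 2 with hj
  have hkj : k + j = m := by omega
  have hkj1 : k ≤ j + 1 := by omega
  have hppos : 0 < p := hp.pos
  have hpm : 0 < p ^ m := pow_pos hppos m
  haveI : NeZero (p ^ m) := ⟨hpm.ne'⟩
  set T := (Finset.range (p ^ m)).filter
      (fun x : ℕ => (p : ℤ) ^ m ∣ a₂ * (x : ℤ) ^ 2 + a₁ * x + a₀) with hT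
  -- membership characterization
  have hQ : ∀ n : ℕ, ((a₂ : ZMod (p ^ m)) * (n : ZMod (p ^ m)) ^ 2
      + (a₁ : ZMod (p ^ m)) * n + (a₀ : ZMod (p ^ m)) = 0)
      ↔ (p : ℤ) ^ m ∣ a₂ * (n : ℤ) ^ 2 + a₁ * n + a₀ := by
    intro n
    have h1 : ((a₂ * (n : ℤ) ^ 2 + a₁ * n + a₀ : ℤ) : ZMod (p ^ m))
        = (a₂ : ZMod (p ^ m)) * (n : ZMod (p ^ m)) ^ 2
          + (a₁ : ZMod (p ^ m)) * n + (a₀ : ZMod (p ^ m)) := by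
      push_cast
      ring
    rw [← h1, ZMod.intCast_zmod_eq_zero_iff_dvd]
    norm_cast
  -- the Nat.card equals T.card
  have hcard : Nat.card {x : ZMod (p ^ m) //
      (a₂ : ZMod (p ^ m)) * x ^ 2 + (a₁ : ZMod (p ^ m)) * x + (a₀ : ZMod (p ^ m)) = 0}
      = T.card := by
    rw [Nat.card_eq_fintype_card, Fintype.card_subtype]
    refine Finset.card_bij (fun x _ => x.val) ?_ ?_ ?_
    · intro x hx
      simp only [Finset.mem_filter, Finset.mem_univ, true_and] at hx
      simp only [hT, Finset.mem_filter, Finset.mem_range]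
      refine ⟨ZMod.val_lt x, (hQ x.val).mp ?_⟩
      rwa [ZMod.natCast_zmod_val]
    · intro x _ y _ h
      exact ZMod.val_injective _ h
    · intro n hn
      simp only [hT, Finset.mem_filter, Finset.mem_range] at hn
      refine ⟨(n : ZMod (p ^ m)), ?_, ZMod.val_cast_of_lt hn.1⟩
      simp only [Finset.mem_filter, Finset.mem_univ, true_and]
      exact (hQ n).mpr hn.2
  rw [hcard]
  -- basic facts about T
  have hTdvd : ∀ x ∈ T, (p : ℤ) ^ m ∣ a₂ * (x : ℤ) ^ 2 + a₁ * x + a₀ := by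
    intro x hx
    exact (Finset.mem_filter.mp hx).2
  have hTlt : ∀ x ∈ T, x < p ^ m := by
    intro x hx
    exact Finset.mem_range.mp (Finset.mem_filter.mp hx).1
  have hfact : ∀ x ∈ T, ∀ y ∈ T,
      (p : ℤ) ^ m ∣ ((x : ℤ) - y) * (a₂ * ((x : ℤ) + y) + a₁) := by
    intro x hx y hy
    have := dvd_sub (hTdvd x hx) (hTdvd y hy)
    have heq : (a₂ * (x : ℤ) ^ 2 + a₁ * x + a₀) - (a₂ * (y : ℤ) ^ 2 + a₁ * y + a₀)
        = ((x : ℤ) - y) * (a₂ * ((x : ℤ) + y) + a₁) := by ring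
    rwa [heq] at this
  have hjm : j = m / 2 := hj
  have hpow1 : (1 : ℕ) ≤ p ^ j := Nat.one_le_pow _ _ hppos
  -- final numeric helper
  have hfin : ∀ n : ℕ, n ≤ p ^ j * 2 → (n : ℝ) ≤ 2 * (p : ℝ) ^ (m / 2) := by
    intro n hn
    have : (n : ℝ) ≤ ((p ^ j * 2 : ℕ) : ℝ) := Nat.cast_le.mpr hn
    rw [hjm] at *
    push_cast at this
    linarith
  by_cases h2 : (p : ℤ) ∣ a₂
  · by_cases h1 : (p : ℤ) ∣ a₁
    · -- case C : no solutions
      have h0 : ¬ (p : ℤ) ∣ a₀ := fun h => hA ⟨h, h1, h2⟩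
      have hTe : T = ∅ := by
        rw [Finset.eq_empty_iff_forall_notMem]
        intro x hx
        have hd := hTdvd x hx
        have hpd : (p : ℤ) ∣ a₂ * (x : ℤ) ^ 2 + a₁ * x + a₀ :=
          (dvd_pow_self (p : ℤ) (by omega : m ≠ 0)).trans hd
        have : (p : ℤ) ∣ a₀ := by
          have h' : (p : ℤ) ∣ a₂ * (x : ℤ) ^ 2 + a₁ * x :=
            dvd_add (h2.mul_right _) (h1.mul_right _)
          have := dvd_sub hpd h'
          simpa using this
        exact h0 this
      rw [hTe]
      simpa using hfin 0 (by positivity)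
    · -- case B : at most one solution
      have hone : T.card ≤ 1 := by
        refine Finset.card_le_one.mpr ?_
        intro x hx y hy
        have hfxy := hfact x hx y hy
        have hnd : ¬ (p : ℤ) ∣ a₂ * ((x : ℤ) + y) + a₁ := by
          intro hc
          have h' : (p : ℤ) ∣ a₂ * ((x : ℤ) + y) := h2.mul_right _
          have := dvd_sub hc h'
          simp only [add_sub_cancel_left] at this
          exact h1 this
        have hdiv : (p : ℤ) ^ m ∣ (x : ℤ) - y :=
          hp'.pow_dvd_of_dvd_mul_right _ hnd hfxy
        have hmod : y ≡ x [MOD p ^ m] := by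
          rw [Nat.modEq_iff_dvd]
          push_cast
          exact hdiv
        have := hmod
        rw [Nat.ModEq] at this
        rw [Nat.mod_eq_of_lt (hTlt y hy), Nat.mod_eq_of_lt (hTlt x hx)] at this
        omega
      exact hfin _ (by omega)
  · -- case A : p ∤ a₂
    have hpk : 0 < p ^ k := pow_pos hppos k
    -- for two solutions in distinct residue classes mod p^k
    have hsum : ∀ x ∈ T, ∀ y ∈ T, x % p ^ k ≠ y % p ^ k →
        (p : ℤ) ^ k ∣ a₂ * ((x : ℤ) + y) + a₁ := by
      intro x hx y hy hne
      have hfxy := hfact x hx y hy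
      rw [← hkj] at hfxy
      have hnd : ¬ (p : ℤ) ^ k ∣ (x : ℤ) - y := by
        intro hc
        apply hne
        have : y ≡ x [MOD p ^ k] := by
          rw [Nat.modEq_iff_dvd]
          push_cast
          exact hc
        exact this.symm
      have := keydvd hp' k j _ _ hfxy hnd
      exact (pow_dvd_pow _ hkj1).trans this
    -- the image of T mod p^k has at most 2 elements
    have himg : (T.image (· % p ^ k)).card ≤ 2 := by
      by_contra hgt
      push_neg at hgt
      obtain ⟨u, v, w, hu, hv, hw, huv, huw, hvw⟩ := Finset.two_lt_card_iff.mp hgt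
      obtain ⟨x, hx, hxu⟩ := Finset.mem_image.mp hu
      obtain ⟨y, hy, hyv⟩ := Finset.mem_image.mp hv
      obtain ⟨z, hz, hzw⟩ := Finset.mem_image.mp hw
      have hxy : x % p ^ k ≠ y % p ^ k := by rw [hxu, hyv]; exact huv
      have hxz : x % p ^ k ≠ z % p ^ k := by rw [hxu, hzw]; exact huw
      have d1 := hsum x hx y hy hxy
      have d2 := hsum x hx z hz hxz
      have d3 : (p : ℤ) ^ k ∣ a₂ * ((y : ℤ) - z) := by
        have := dvd_sub d1 d2
        have heq : (a₂ * ((x : ℤ) + y) + a₁) - (a₂ * ((x : ℤ) + z) + a₁)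
            = a₂ * ((y : ℤ) - z) := by ring
        rwa [heq] at this
      have d4 : (p : ℤ) ^ k ∣ (y : ℤ) - z := hp'.pow_dvd_of_dvd_mul_left _ h2 d3
      have hmod : z ≡ y [MOD p ^ k] := by
        rw [Nat.modEq_iff_dvd]
        push_cast
        exact d4
      exact hvw (by rw [← hyv, ← hzw]; exact hmod.symm)
    -- fibers of reduction mod p^k have at most p^j elements
    have hfiber : ∀ r ∈ T.image (· % p ^ k),
        (T.filter (fun x => x % p ^ k = r)).card ≤ p ^ j := by
      intro r _
      have : (T.filter (fun x => x % p ^ k = r)).card ≤ (Finset.range (p ^ j)).card := by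
        refine Finset.card_le_card_of_injOn (fun x => x / p ^ k) ?_ ?_
        · intro x hx
          simp only [Finset.mem_coe, Finset.mem_filter] at hx
          have hxlt := hTlt x hx.1
          rw [Finset.mem_coe, Finset.mem_range]
          rw [Nat.div_lt_iff_lt_mul hpk]
          calc x < p ^ m := hxlt
            _ = p ^ j * p ^ k := by rw [← pow_add]; congr 1; omega
        · intro x hx y hy hxy
          simp only [Finset.coe_filter, Set.mem_setOf_eq] at hx hy
          have e4 : x / p ^ k = y / p ^ k := hxy
          have e3 : x % p ^ k = y % p ^ k := by rw [hx.2, hy.2]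
          calc x = p ^ k * (x / p ^ k) + x % p ^ k := (Nat.div_add_mod x (p ^ k)).symm
            _ = p ^ k * (y / p ^ k) + y % p ^ k := by rw [e3, e4]
            _ = y := Nat.div_add_mod y (p ^ k)
      simpa using this
    have hTcard : T.card ≤ p ^ j * 2 :=
      le_trans (Finset.card_le_mul_card_image T (p ^ j) hfiber)
        (Nat.mul_le_mul_left _ himg)
    exact hfin _ hTcard
end

section
/- Let c, d be positive integers with d | c and let f be the largest positive integer with f² | cd. Then for every integer k ≥ 1, the maximum of f̃/d̃^k over all integers d̃ with d | d̃ | c and f̃ the largest integer with f̃² | c·d̃, equals f/d^k; and for k = 0 the maximum of f̃ equals c (attained at d̃ = c). -/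
/-!
The largest `f` with `f² ∣ n` is a multiple of every `a` with `a² ∣ n`, since
`lcm a f ^ 2 = lcm (a²) (f²)` still divides `n`. Consequently, if `f̃² ∣ n·m` then
`f̃ ∣ f·m`: splitting off `g = gcd f̃ m`, the cofactor `f̃ / g` is coprime to `m / g` and
its square divides `n`. For `d̃ = d·m` this gives `f̃ / d̃^k ≤ f·m / (d·m)^k ≤ f / d^k`
once `k ≥ 1`. For `k = 0`, `f̃² ∣ c·d̃ ∣ c²` bounds `f̃` by `c`.
-/

namespace Nat

variable {n f a : ℕ}

theorem pos_of_isGreatest_sq_dvd (hf : IsGreatest {x : ℕ | x ^ 2 ∣ n} f) : 0 < f :=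
  hf.2 (show 1 ^ 2 ∣ n by rw [one_pow]; exact one_dvd n)

theorem ne_zero_of_isGreatest_sq_dvd (hf : IsGreatest {x : ℕ | x ^ 2 ∣ n} f) : n ≠ 0 := by
  rintro rfl
  exact absurd (hf.2 (dvd_zero ((f + 1) ^ 2))) (by omega)

theorem dvd_of_isGreatest_sq_dvd (hf : IsGreatest {x : ℕ | x ^ 2 ∣ n} f) (ha : a ^ 2 ∣ n) :
    a ∣ f := by
  have hlcm : lcm a f ^ 2 ∣ n := by
    rw [← pow_lcm_pow]
    exact Nat.lcm_dvd ha hf.1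
  have ha0 : 0 < a := Nat.pos_of_ne_zero fun h => ne_zero_of_isGreatest_sq_dvd hf <| by
    simpa [h] using ha
  have hlcm_pos : 0 < lcm a f := Nat.lcm_pos ha0 (pos_of_isGreatest_sq_dvd hf)
  have hlcm_eq : lcm a f = f :=
    le_antisymm (hf.2 hlcm) (Nat.le_of_dvd hlcm_pos (dvd_lcm_right a f))
  exact hlcm_eq ▸ dvd_lcm_left a f

theorem dvd_mul_of_isGreatest_sq_dvd {m : ℕ} (hf : IsGreatest {x : ℕ | x ^ 2 ∣ n} f)
    (ha : a ^ 2 ∣ n * m) : a ∣ f * m := by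
  obtain ⟨a', m', hcop, ha_eq, hm_eq⟩ := exists_coprime a m
  set g := gcd a m
  rw [ha_eq, hm_eq] at ha ⊢
  rcases Nat.eq_zero_or_pos g with hg | hg
  · simp [hg]
  have ha' : a' ^ 2 ∣ n := by
    refine (hcop.pow_left 2).dvd_of_dvd_mul_right (Nat.dvd_of_mul_dvd_mul_right hg ?_)
    calc a' ^ 2 * g ∣ a' ^ 2 * g * g := dvd_mul_right _ g
      _ = (a' * g) ^ 2 := by ring
      _ ∣ n * (m' * g) := ha
      _ = n * m' * g := by ring
  calc a' * g ∣ f * g := mul_dvd_mul_right (dvd_of_isGreatest_sq_dvd hf ha') g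
    _ ∣ f * (m' * g) := mul_dvd_mul_left f (dvd_mul_left g m')

theorem le_of_sq_dvd_mul_of_dvd {c d : ℕ} (hc : 0 < c) (hd : d ∣ c) (ha : a ^ 2 ∣ c * d) :
    a ≤ c :=
  Nat.le_of_dvd hc <| (Nat.pow_dvd_pow_iff two_ne_zero).1 <|
    ha.trans (by rw [sq]; exact mul_dvd_mul_left c hd)

end Nat

theorem div_pow_le_div_pow_of_le_mul {a f d m k : ℕ} (hk : 1 ≤ k) (h : a ≤ f * m) :
    (a : ℝ) / ((d * m : ℕ) : ℝ) ^ k ≤ (f : ℝ) / (d : ℝ) ^ k := by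
  rcases Nat.eq_zero_or_pos m with rfl | hm
  · simp only [mul_zero, Nat.cast_zero, zero_pow (by omega : k ≠ 0), div_zero]
    positivity
  rcases Nat.eq_zero_or_pos d with rfl | hd
  · simp [zero_pow (by omega : k ≠ 0)]
  rw [div_le_div_iff₀ (by positivity) (by positivity)]
  exact_mod_cast calc a * d ^ k ≤ f * m * d ^ k := Nat.mul_le_mul_right _ h
    _ ≤ f * m ^ k * d ^ k :=
      Nat.mul_le_mul_right _ (Nat.mul_le_mul_left f (Nat.le_self_pow (by omega) m))
    _ = f * (d * m) ^ k := by ring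

theorem stmt18_general (c d f : ℕ) (hc : 0 < c)
    (hf1 : f ^ 2 ∣ c * d) (hf2 : ∀ f' : ℕ, f' ^ 2 ∣ c * d → f' ≤ f) :
    (∀ k : ℕ, 1 ≤ k → ∀ dt ft : ℕ, d ∣ dt → dt ∣ c →
      ft ^ 2 ∣ c * dt → (∀ f' : ℕ, f' ^ 2 ∣ c * dt → f' ≤ ft) →
      (ft : ℝ) / (dt : ℝ) ^ k ≤ (f : ℝ) / (d : ℝ) ^ k) ∧
    (∀ dt ft : ℕ, d ∣ dt → dt ∣ c → ft ^ 2 ∣ c * dt → ft ≤ c) ∧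
    (∀ ft : ℕ, ft ^ 2 ∣ c * c → (∀ f' : ℕ, f' ^ 2 ∣ c * c → f' ≤ ft) → ft = c) := by
  have hf : IsGreatest {x : ℕ | x ^ 2 ∣ c * d} f := ⟨hf1, fun _ => hf2 _⟩
  refine ⟨fun k hk dt ft hddt hdtc hft1 _ => ?_,
    fun dt ft _ hdtc hft1 => Nat.le_of_sq_dvd_mul_of_dvd hc hdtc hft1,
    fun ft hft1 hft2 => le_antisymm (Nat.le_of_sq_dvd_mul_of_dvd hc dvd_rfl hft1)
      (hft2 c (by rw [sq]))⟩
  obtain ⟨m, rfl⟩ := hddt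
  have hm : 0 < m :=
    Nat.pos_of_ne_zero (right_ne_zero_of_mul (ne_zero_of_dvd_ne_zero hc.ne' hdtc))
  have hdvd : ft ∣ f * m :=
    Nat.dvd_mul_of_isGreatest_sq_dvd hf (by rwa [← mul_assoc] at hft1)
  exact div_pow_le_div_pow_of_le_mul hk
    (Nat.le_of_dvd (Nat.mul_pos (Nat.pos_of_isGreatest_sq_dvd hf) hm) hdvd)

/-- Let `d ∣ c` and let `f` be the largest integer with `f² ∣ cd`.
Then for every `k ≥ 1`, the maximum of `f̃/d̃^k` over divisors `d ∣ d̃ ∣ c` (with `f̃`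
the largest integer with `f̃² ∣ c·d̃`) equals `f/d^k`; and for `k = 0` the maximum of
`f̃` equals `c`, attained at `d̃ = c`. -/
theorem stmt18 (c d f : ℕ) (hc : 0 < c) (hdc : d ∣ c)
    (hf1 : f ^ 2 ∣ c * d) (hf2 : ∀ f' : ℕ, f' ^ 2 ∣ c * d → f' ≤ f) :
    (∀ k : ℕ, 1 ≤ k → ∀ dt ft : ℕ, d ∣ dt → dt ∣ c →
      ft ^ 2 ∣ c * dt → (∀ f' : ℕ, f' ^ 2 ∣ c * dt → f' ≤ ft) →
      (ft : ℝ) / (dt : ℝ) ^ k ≤ (f : ℝ) / (d : ℝ) ^ k) ∧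
    (∀ dt ft : ℕ, d ∣ dt → dt ∣ c → ft ^ 2 ∣ c * dt → ft ≤ c) ∧
    (∀ ft : ℕ, ft ^ 2 ∣ c * c → (∀ f' : ℕ, f' ^ 2 ∣ c * c → f' ≤ ft) → ft = c) :=
  stmt18_general c d f hc hf1 hf2
end
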